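/- arXiv:math/0701903 — 3 statements merged into one kernel-verified Lean document; each statement's English description precedes it below -/
import Mathlib

section
/- Let A be a finite abelian group equipped with an alternating bimultiplicative pairing ω : A × A → C into a cyclic group C, and suppose ω is nondegenerate (ω(a,b) = 1 for all b implies a = 1). Then the order of A is a perfect square. -/
universe u v

private theorem stmt3_aux : ∀ (n : ℕ) {A : Type u} {C : Type v} [CommGroup A] [Finite A]
    [Group C] [IsCyclic C] (ω : A → A → C),
    (∀ a b c, ω (a * b) c = ω a c * ω b c) →
    (∀ a b c, ω a (b * c) = ω a b * ω a c) →
    (∀ a, ω a a = 1) →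
    (∀ a, (∀ b, ω a b = 1) → a = 1) →
    Nat.card A = n → ∃ d : ℕ, Nat.card A = d * d := by
  intro n
  induction n using Nat.strong_induction_on with
  | _ n ih =>
  intro A C _ _ _ _ ω hl hr halt hnd hcardn
  -- package the pairing as monoid homs in each variable
  let fR : A → A →* C := fun c => MonoidHom.mk' (ω c) (hr c)
  let fL : A → A →* C := fun c => MonoidHom.mk' (fun x => ω x c) (fun x y => hl x y c)
  have hzr : ∀ (c x : A) (i : ℤ), ω c (x ^ i) = (ω c x) ^ i := fun c x i => map_zpow (fR c) x i
  have hzl : ∀ (c x : A) (i : ℤ), ω (x ^ i) c = (ω x c) ^ i := fun c x i => map_zpow (fL c) x i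
  have hpr : ∀ (c x : A) (k : ℕ), ω c (x ^ k) = (ω c x) ^ k := fun c x k => map_pow (fR c) x k
  have hpl : ∀ (c x : A) (k : ℕ), ω (x ^ k) c = (ω x c) ^ k := fun c x k => map_pow (fL c) x k
  have h1r : ∀ c : A, ω c 1 = 1 := fun c => map_one (fR c)
  have h1l : ∀ c : A, ω 1 c = 1 := fun c => map_one (fL c)
  -- skew symmetry
  have hsk : ∀ x y : A, ω y x = (ω x y)⁻¹ := by
    intro x y
    have h := halt (x * y)
    rw [hl, hr, hr, halt, halt, one_mul, mul_one] at h
    rw [inv_eq_of_mul_eq_one_right h]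
  by_cases hA1 : Nat.card A = 1
  · exact ⟨1, by simp [hA1]⟩
  · have hnt : Nontrivial A := by
      rw [← Finite.one_lt_card_iff_nontrivial]
      exact lt_of_le_of_ne Nat.card_pos (Ne.symm hA1)
    set m := Monoid.exponent A with hm
    have hm1 : 1 < m := Monoid.one_lt_exponent
    obtain ⟨a, ha⟩ := Monoid.exists_orderOf_eq_exponent (Monoid.ExponentExists.of_finite (G := A))
    rw [← hm] at ha
    -- the key lemma on the image of the pairing with an element of maximal order
    have key : ∀ c : A, orderOf c = m →
        (∃ t : A, orderOf (ω c t) = m) ∧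
        (∀ t : A, orderOf (ω c t) = m → ∀ x : A, ∃ j : ℤ, ω c x = (ω c t) ^ j) := by
      intro c hc
      haveI : Finite ((fR c).range) := Set.Finite.to_subtype (Set.finite_range (fR c))
      have hcardR : Nat.card (fR c).range = m := by
        obtain ⟨g, hg⟩ := IsCyclic.exists_generator (α := (fR c).range)
        have hgcard : orderOf g = Nat.card (fR c).range :=
          orderOf_eq_card_of_forall_mem_zpowers hg
        have hdvd1 : m ∣ Nat.card (fR c).range := by
          rw [← hc]
          apply orderOf_dvd_of_pow_eq_one
          apply hnd
          intro x
          have h1 : ω (c ^ Nat.card (fR c).range) x = (ω c x) ^ Nat.card (fR c).range :=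
            hpl x c _
          have h2 : (⟨ω c x, ⟨x, rfl⟩⟩ : (fR c).range) ^ Nat.card (fR c).range = 1 :=
            pow_card_eq_one'
          have h3 := congrArg Subtype.val h2
          push_cast at h3
          rw [h1]
          exact h3
        have hdvd2 : Nat.card (fR c).range ∣ m := by
          rw [← hgcard]
          apply orderOf_dvd_of_pow_eq_one
          apply Subtype.ext
          push_cast
          obtain ⟨x, hx⟩ := g.2
          have : (g : C) ^ m = ω c (x ^ m) := by
            rw [hpr c x m]
            rw [show ω c x = (g : C) from hx]
          rw [this, Monoid.pow_exponent_eq_one, h1r]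
        exact Nat.dvd_antisymm hdvd2 hdvd1
      constructor
      · obtain ⟨g, hg⟩ := IsCyclic.exists_generator (α := (fR c).range)
        obtain ⟨t, ht⟩ := g.2
        refine ⟨t, ?_⟩
        have : (ω c t) = (g : C) := ht
        rw [this, Subgroup.orderOf_coe, orderOf_eq_card_of_forall_mem_zpowers hg, hcardR]
      · intro t ht x
        have hle : Subgroup.zpowers (ω c t) ≤ (fR c).range := by
          rw [Subgroup.zpowers_le]
          exact ⟨t, rfl⟩
        have heq : Subgroup.zpowers (ω c t) = (fR c).range := by
          apply Subgroup.eq_of_le_of_card_ge hle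
          rw [hcardR, Nat.card_zpowers, ht]
        have hx : ω c x ∈ Subgroup.zpowers (ω c t) := heq ▸ ⟨x, rfl⟩
        obtain ⟨j, hj⟩ := hx
        exact ⟨j, hj.symm⟩
    obtain ⟨⟨b, hb⟩, hgena⟩ := key a ha
    have hgena' := hgena b hb
    -- order of b is m
    have hob : orderOf b = m := by
      apply Nat.dvd_antisymm (hm ▸ Monoid.order_dvd_exponent b)
      rw [← hb]
      apply orderOf_dvd_of_pow_eq_one
      rw [← hpr, pow_orderOf_eq_one, h1r]
    have hba : orderOf (ω b a) = m := by
      rw [hsk a b, orderOf_inv, hb]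
    have hgenb := (key b hob).2 a hba
    -- the subgroup B orthogonal to both a and b
    let B : Subgroup A := (fR a).ker ⊓ (fR b).ker
    have hBmem : ∀ x : A, x ∈ B ↔ ω a x = 1 ∧ ω b x = 1 := by
      intro x; rfl
    -- decomposition: every element is a^i * b^j * y with y ∈ B
    have hdec : ∀ z : A, ∃ (i j : ℤ) (y : A), y ∈ B ∧ z = a ^ i * b ^ j * y := by
      intro z
      obtain ⟨j, hj⟩ := hgena' z
      obtain ⟨i, hi⟩ := hgenb (z * b ^ (-j))
      refine ⟨i, j, z * b ^ (-j) * a ^ (-i), ?_, by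
        simp only [zpow_neg]
        simp [mul_comm, mul_left_comm, mul_assoc]⟩
      have h1 : ω a (z * b ^ (-j)) = 1 := by
        rw [hr, hzr, hj, ← zpow_add, add_neg_cancel, zpow_zero]
      rw [hBmem]
      constructor
      · rw [hr, h1, hzr, halt, one_zpow, mul_one]
      · rw [hr, hi, hzr, ← zpow_add, add_neg_cancel, zpow_zero]
    -- applying ω a and ω b to such a decomposition
    have happ : ∀ (i j : ℤ) (y : A), y ∈ B →
        ω a (a ^ i * b ^ j * y) = (ω a b) ^ j ∧ ω b (a ^ i * b ^ j * y) = (ω b a) ^ i := by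
      intro i j y hy
      rw [hBmem] at hy
      constructor
      · rw [hr, hr, hzr, hzr, halt, one_zpow, one_mul, hy.1, mul_one]
      · rw [hr, hr, hzr, hzr, halt, one_zpow, mul_one, hy.2, mul_one]
    -- the bijection (zpowers a) × (zpowers b) × B ≃ A
    let e : (Subgroup.zpowers a) × (Subgroup.zpowers b) × B → A :=
      fun p => (p.1 : A) * (p.2.1 : A) * (p.2.2 : A)
    have hbij : Function.Bijective e := by
      constructor
      · rintro ⟨⟨p, i, rfl⟩, ⟨q, j, rfl⟩, y⟩ ⟨⟨p', i', rfl⟩, ⟨q', j', rfl⟩, y'⟩ hxy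
        simp only [e] at hxy
        have h1 := (happ i j y y.2).1
        have h2 := (happ i j y y.2).2
        have h1' := (happ i' j' y' y'.2).1
        have h2' := (happ i' j' y' y'.2).2
        rw [hxy, h1'] at h1
        rw [hxy, h2'] at h2
        -- b ^ j = b ^ j'
        have hjj : (b : A) ^ j = b ^ j' := by
          have : (ω a b) ^ (j - j') = 1 := by
            rw [zpow_sub, h1, mul_inv_cancel]
          rw [← orderOf_dvd_iff_zpow_eq_one, hb, ← hob] at this
          have := orderOf_dvd_iff_zpow_eq_one.mp this
          rw [zpow_sub, mul_inv_eq_one] at this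
          exact this
        have hii : (a : A) ^ i = a ^ i' := by
          have : (ω b a) ^ (i - i') = 1 := by
            rw [zpow_sub, h2, mul_inv_cancel]
          rw [← orderOf_dvd_iff_zpow_eq_one, hba, ← ha] at this
          have := orderOf_dvd_iff_zpow_eq_one.mp this
          rw [zpow_sub, mul_inv_eq_one] at this
          exact this
        have hyy : (y : A) = y' := by
          have := hxy
          rw [hjj, hii] at this
          exact mul_left_cancel this
        exact Prod.ext (Subtype.ext hii) (Prod.ext (Subtype.ext hjj) (Subtype.ext hyy))
      · intro z
        obtain ⟨i, j, y, hy, hz⟩ := hdec z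
        exact ⟨⟨⟨a ^ i, i, rfl⟩, ⟨b ^ j, j, rfl⟩, ⟨y, hy⟩⟩, hz.symm⟩
    have hcardA : Nat.card A = m * (m * Nat.card B) := by
      rw [← Nat.card_eq_of_bijective e hbij, Nat.card_prod, Nat.card_prod,
        Nat.card_zpowers, Nat.card_zpowers, ha, hob]
    -- induction hypothesis applied to B with the restricted pairing
    have hBpos : 0 < Nat.card B := Nat.card_pos
    have hBlt : Nat.card B < n := by
      rw [← hcardn, hcardA]
      calc Nat.card B = 1 * Nat.card B := (one_mul _).symm
        _ < m * (m * Nat.card B) := by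
            rw [← mul_assoc]
            exact (Nat.mul_lt_mul_right hBpos).mpr (by nlinarith)
    have hres := ih (Nat.card B) hBlt (A := B) (C := C)
      (fun x y => ω x y)
      (fun x y z => hl x y z)
      (fun x y z => hr x y z)
      (fun x => halt x)
      ?_ rfl
    · obtain ⟨d, hd⟩ := hres
      exact ⟨m * d, by rw [hcardA, hd]; ring⟩
    · -- nondegeneracy of the restricted pairing
      intro x hx
      apply Subtype.ext
      apply hnd
      intro z
      obtain ⟨i, j, y, hy, hz⟩ := hdec z
      have hxB := x.2
      rw [hBmem] at hxB
      have hxa : ω (x : A) a = 1 := by rw [hsk, hxB.1, inv_one]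
      have hxb : ω (x : A) b = 1 := by rw [hsk, hxB.2, inv_one]
      rw [hz, hr, hr, hzr, hzr, hxa, hxb, one_zpow, one_zpow, one_mul, one_mul]
      exact hx ⟨y, hy⟩

/-- Let `A` be a finite abelian group with an alternating bimultiplicative pairing
`ω : A × A → C` into a cyclic group `C` which is nondegenerate. Then `|A|` is a perfect
square. -/
theorem stmt3 {A C : Type*} [CommGroup A] [Finite A] [Group C] [IsCyclic C]
    (ω : A → A → C)
    (hl : ∀ a b c, ω (a * b) c = ω a c * ω b c)
    (hr : ∀ a b c, ω a (b * c) = ω a b * ω a c)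
    (halt : ∀ a, ω a a = 1)
    (hnd : ∀ a, (∀ b, ω a b = 1) → a = 1) :
    ∃ d : ℕ, Nat.card A = d * d := by
  exact stmt3_aux (Nat.card A) ω hl hr halt hnd rfl
end

section
/- Let K be a field of characteristic ≠ 2 containing a square root of −1, let n ≥ 2 be even, and let a₁, …, a_n ∈ Kˣ with a₁⋯a_n = 1 (up to squares). Then the form ⟨a₁, …, a_n⟩ is Witt-equivalent to the sum of the n−2 two-fold Pfister forms ⟨⟨a_i, a₁a₂⋯a_{i−1}⟩⟩ for i = 2, …, n−1. In particular, every n-dimensional form lying in I²(K) is a sum of at most n−2 two-fold Pfister forms in W(K). -/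
/-!
Since `-1 = i²` is a square, `⟨-x⟩ ≅ ⟨x⟩`, and every `x` is a sum of two squares,
`x = ((x + 1) / 2)² + (i (x - 1) / 2)²`, so `⟨x, x⟩ ≅ ⟨1, 1⟩` for `x ≠ 0`; and a diagonal form
only depends on the multiset of its entries. With `P_j = a₁ ⋯ a_j`,
`⟨⟨a_{j+1}, P_j⟩⟩ ≅ ⟨1, a_{j+1}, P_j, P_{j+1}⟩`; adding `⟨1, -1⟩ ≅ ⟨a₁, a₁⟩ = ⟨P₁, P₁⟩` to the sum
over `j = 1, …, n - 2`, every `P_j` with `j ≤ n - 2` occurs twice and the sum collapses to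
`⟨a₁, …, a_{n-1}, P_{n-1}⟩ ⊥ 3(n - 2)⟨1⟩`. Finally `P_{n-1} = a_n` modulo squares since `P_n` is a
square, and `3(n - 2)⟨1⟩` is hyperbolic because `n` is even.
-/

open QuadraticMap Finset
open Multiset (replicate)

theorem exists_equiv_of_map_univ_eq {ι ι' α : Type*} [Fintype ι] [Fintype ι'] {w : ι → α}
    {w' : ι' → α} (h : univ.val.map w = univ.val.map w') :
    ∃ e : ι ≃ ι', ∀ i, w' (e i) = w i := by
  classical
  have hcard (x : α) : Fintype.card {i // w i = x} = Fintype.card {i' // w' i' = x} := by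
    simpa [Multiset.count_map, Fintype.card_subtype, Finset.card, eq_comm] using
      congrArg (Multiset.count x) h
  exact ⟨.ofFiberEquiv fun x => Fintype.equivOfCardEq (hcard x), Equiv.ofFiberEquiv_map _⟩

theorem map_univ_val_eq_sum_singleton {ι α : Type*} [Fintype ι] (w : ι → α) :
    univ.val.map w = ∑ i, {w i} := by
  rw [← Multiset.sum_map_singleton (univ.val.map w), Multiset.map_map]
  rfl

theorem add_sum_range_add_succ_eq {M : Type*} [AddCommMonoid M] (g : ℕ → M) (N : ℕ) :
    g 0 + ∑ j ∈ range N, (g j + g (j + 1)) = g N + 2 • ∑ j ∈ range N, g j := by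
  induction N with
  | zero => simp
  | succ N ih =>
    rw [sum_range_succ, ← add_assoc, ih, sum_range_succ]
    abel

section CommSemiring

variable {R : Type*} [CommSemiring R] {ι ι' : Type*} [Fintype ι] [Fintype ι']

theorem weightedSumSquares_equivalent_of_map_univ_eq {w : ι → R} {w' : ι' → R}
    (h : univ.val.map w = univ.val.map w') :
    (weightedSumSquares R w).Equivalent (weightedSumSquares R w') := by
  obtain ⟨e, he⟩ := exists_equiv_of_map_univ_eq h
  refine ⟨{ toLinearEquiv := LinearEquiv.funCongrLeft R R e.symm, map_app' := fun v => ?_ }⟩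
  simp only [weightedSumSquares_apply]
  change ∑ i, w' i • (v (e.symm i) * v (e.symm i)) = ∑ i, w i • (v i * v i)
  exact (Fintype.sum_equiv e _ _ fun i => by simp [he]).symm

theorem weightedSumSquares_sumElim_equivalent (w : ι → R) (w' : ι' → R) :
    (weightedSumSquares R (Sum.elim w w')).Equivalent
      ((weightedSumSquares R w).prod (weightedSumSquares R w')) :=
  ⟨{ toLinearEquiv := LinearEquiv.sumArrowLequivProdArrow ι ι' R R
     map_app' := fun v => by simp [weightedSumSquares_apply, Fintype.sum_sum_type] }⟩

/-- The diagonal form `⟨s⟩`. The order of its entries, fixed by `Multiset.toList`, is arbitrary,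
but only its isometry class is ever used (`weightedSumSquares_equivalent_diagForm`). -/
noncomputable def diagForm (s : Multiset R) : QuadraticMap R (Fin s.toList.length → R) R :=
  weightedSumSquares R s.toList.get

theorem weightedSumSquares_equivalent_diagForm {w : ι → R} {s : Multiset R}
    (h : ∑ i, {w i} = s) : (weightedSumSquares R w).Equivalent (diagForm s) := by
  refine weightedSumSquares_equivalent_of_map_univ_eq ?_
  rw [map_univ_val_eq_sum_singleton, h, Fin.univ_val_map, List.ofFn_get, Multiset.coe_toList]

theorem diagForm_add_equivalent (s t : Multiset R) :
    (diagForm (s + t)).Equivalent ((diagForm s).prod (diagForm t)) := by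
  refine .trans (.symm (weightedSumSquares_equivalent_diagForm ?_))
    (weightedSumSquares_sumElim_equivalent _ _)
  rw [Fintype.sum_sum_type]
  simp only [Sum.elim_inl, Sum.elim_inr, ← map_univ_val_eq_sum_singleton, Fin.univ_val_map,
    List.ofFn_get, Multiset.coe_toList]

theorem QuadraticMap.Equivalent.diagForm_add {s s' t t' : Multiset R}
    (hs : (diagForm s).Equivalent (diagForm s')) (ht : (diagForm t).Equivalent (diagForm t')) :
    (diagForm (s + t)).Equivalent (diagForm (s' + t')) :=
  ((diagForm_add_equivalent s t).trans (hs.prod ht)).trans (diagForm_add_equivalent s' t').symm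

end CommSemiring

section Field

variable {K : Type*} [Field K]

-- The two-square identity `(p s - q t)² + (q s + p t)² = (p² + q²) (s² + t²)`.
theorem weightedSumSquares_const_two_equivalent_one_of_sq_add_sq {x p q : K} (hx : x ≠ 0)
    (h : p ^ 2 + q ^ 2 = x) :
    (weightedSumSquares K fun _ : Fin 2 => x).Equivalent
      (weightedSumSquares K fun _ : Fin 2 => (1 : K)) :=
  ⟨{ toFun v := ![p * v 0 - q * v 1, q * v 0 + p * v 1]
     invFun v := ![(p * v 0 + q * v 1) / x, (p * v 1 - q * v 0) / x]
     map_add' u v := by ext j; fin_cases j <;> simp <;> ring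
     map_smul' c v := by ext j; fin_cases j <;> simp <;> ring
     left_inv v := by
       ext j; fin_cases j <;> simp <;> field_simp
       exacts [by linear_combination v 0 * h, by linear_combination v 1 * h]
     right_inv v := by
       ext j; fin_cases j <;> simp <;> field_simp
       exacts [by linear_combination v 0 * h, by linear_combination v 1 * h]
     map_app' v := by
       simp [weightedSumSquares_apply, Fin.sum_univ_two]
       linear_combination (v 0 ^ 2 + v 1 ^ 2) * h }⟩

theorem exists_sq_add_sq_eq (h2 : (2 : K) ≠ 0) {i : K} (hi : i ^ 2 = -1) (x : K) :
    ∃ p q : K, p ^ 2 + q ^ 2 = x :=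
  ⟨(x + 1) / 2, i * (x - 1) / 2, by field_simp; linear_combination (x - 1) ^ 2 * hi⟩

theorem ne_zero_of_sq_eq_neg_one {i : K} (hi : i ^ 2 = -1) : i ≠ 0 := by
  rintro rfl
  norm_num at hi

theorem diagForm_replicate_two_equivalent (h2 : (2 : K) ≠ 0) {i : K} (hi : i ^ 2 = -1) {x : K}
    (hx : x ≠ 0) :
    (diagForm (replicate 2 x)).Equivalent (diagForm (replicate 2 (1 : K))) := by
  obtain ⟨p, q, hpq⟩ := exists_sq_add_sq_eq h2 hi x
  exact (weightedSumSquares_equivalent_diagForm (by simp [Multiset.nsmul_singleton])).symm.trans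
    ((weightedSumSquares_const_two_equivalent_one_of_sq_add_sq hx hpq).trans
      (weightedSumSquares_equivalent_diagForm (by simp [Multiset.nsmul_singleton])))

theorem diagForm_add_self_equivalent (h2 : (2 : K) ≠ 0) {i : K} (hi : i ^ 2 = -1)
    {s : Multiset K} (hs : ∀ x ∈ s, x ≠ 0) :
    (diagForm (s + s)).Equivalent (diagForm (replicate (2 * s.card) (1 : K))) := by
  induction s using Multiset.induction_on with
  | empty => exact .refl _
  | cons x s ih =>
    rw [Multiset.card_cons, show 2 * (s.card + 1) = 2 + 2 * s.card by ring, Multiset.replicate_add,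
      show x ::ₘ s + x ::ₘ s = replicate 2 x + (s + s) by
        simp [Multiset.add_cons, Multiset.cons_add]]
    exact (diagForm_replicate_two_equivalent h2 hi (hs x (Multiset.mem_cons_self x s))).diagForm_add
      (ih fun y hy => hs y (Multiset.mem_cons_of_mem hy))

theorem diagForm_singleton_sq_mul_equivalent {c : K} (hc : c ≠ 0) (x : K) :
    (diagForm {c ^ 2 * x}).Equivalent (diagForm {x}) :=
  (weightedSumSquares_equivalent_diagForm (w := fun _ : Fin 1 => c ^ 2 * x) (by simp)).symm.trans
    (.trans ⟨QuadraticForm.isometryEquivWeightedSumSquaresWeightedSumSquares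
        (fun _ => Units.mk0 c hc) fun _ => mul_comm _ _⟩
      (weightedSumSquares_equivalent_diagForm (by simp)))

theorem weightedSumSquares_neg_one_pow_equivalent {i : K} (hi : i ^ 2 = -1) (m : ℕ) :
    (weightedSumSquares K fun j : Fin m => (-1 : K) ^ (j : ℕ)).Equivalent
      (diagForm (replicate m (1 : K))) :=
  .trans ⟨QuadraticForm.isometryEquivWeightedSumSquaresWeightedSumSquares (w' := fun _ => 1)
      (fun j => (Units.mk0 i (ne_zero_of_sq_eq_neg_one hi)) ^ (j : ℕ))
      fun j => by simp; rw [← pow_mul, mul_comm, pow_mul, hi]⟩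
    (weightedSumSquares_equivalent_diagForm (by simp [Multiset.nsmul_singleton]))

theorem weightedSumSquares_prod_neg_one_pow_equivalent {i : K} (hi : i ^ 2 = -1) (a : ℕ → K)
    (n m : ℕ) :
    ((weightedSumSquares K fun j : Fin n => a (j + 1)).prod
      (weightedSumSquares K fun j : Fin m => (-1 : K) ^ (j : ℕ))).Equivalent
      (diagForm (∑ j ∈ range n, {a (j + 1)} + replicate m 1)) :=
  ((weightedSumSquares_equivalent_diagForm
    (Fin.sum_univ_eq_sum_range (fun j => ({a (j + 1)} : Multiset K)) n)).prod
      (weightedSumSquares_neg_one_pow_equivalent hi m)).trans (diagForm_add_equivalent _ _).symm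

theorem weightedSumSquares_pfisterSum_equivalent {i : K} (hi : i ^ 2 = -1) {ι : Type*} [Fintype ι]
    (x y : ι → K) :
    (weightedSumSquares K fun p : ι × Fin 4 => ![1, -x p.1, -y p.1, x p.1 * y p.1] p.2).Equivalent
      (diagForm (∑ j, {1, x j, y j, x j * y j})) :=
  .trans ⟨QuadraticForm.isometryEquivWeightedSumSquaresWeightedSumSquares
      (w' := fun p : ι × Fin 4 => ![1, x p.1, y p.1, x p.1 * y p.1] p.2)
      (fun p => Units.mk0 (![1, i, i, 1] p.2) (by
        obtain ⟨_, s⟩ := p; fin_cases s <;> simp [ne_zero_of_sq_eq_neg_one hi]))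
      fun p => by obtain ⟨_, s⟩ := p; fin_cases s <;> simp [hi]⟩
    (weightedSumSquares_equivalent_diagForm (by
      simp [Fintype.sum_prod_type, Fin.sum_univ_four, Multiset.insert_eq_cons]))

theorem diagForm_telescope_equivalent (h2 : (2 : K) ≠ 0) {i : K} (hi : i ^ 2 = -1)
    (x y : ℕ → K) {N : ℕ} (hy : ∀ j < N, y j ≠ 0) :
    (diagForm ({y 0} + ∑ j ∈ range N, {1, x j, y j, y (j + 1)})).Equivalent
      (diagForm (∑ j ∈ range N, {x j} + replicate (3 * N) 1 + {y N})) := by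
  set s := ∑ j ∈ range N, ({y j} : Multiset K)
  have hblock (j : ℕ) : ({1, x j, y j, y (j + 1)} : Multiset K) =
      {x j} + {1} + ({y j} + {y (j + 1)}) := by
    simp only [Multiset.insert_eq_cons, ← Multiset.singleton_add]
    abel
  have hsplit : {y 0} + ∑ j ∈ range N, {1, x j, y j, y (j + 1)} =
      ∑ j ∈ range N, {x j} + replicate N 1 + {y N} + (s + s) := by
    rw [sum_congr rfl fun j _ => hblock j, sum_add_distrib, add_left_comm,
      add_sum_range_add_succ_eq (fun j => ({y j} : Multiset K)), sum_add_distrib, sum_const,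
      card_range, Multiset.nsmul_singleton]
    abel
  have hmerge : ∑ j ∈ range N, {x j} + replicate N 1 + {y N} +
      replicate (2 * s.card) 1 = ∑ j ∈ range N, {x j} + replicate (3 * N) 1 + {y N} := by
    rw [show 3 * N = N + 2 * s.card by simp [s, Multiset.card_sum]; ring, Multiset.replicate_add]
    abel
  rw [hsplit, ← hmerge]
  refine (Equivalent.refl _).diagForm_add (diagForm_add_self_equivalent h2 hi ?_)
  simp only [s, Multiset.mem_sum, Multiset.mem_singleton, mem_range]
  rintro _ ⟨j, hj, rfl⟩
  exact hy j hj

theorem weightedSumSquares_pfisterSum_prod_equivalent (h2 : (2 : K) ≠ 0) {i : K} (hi : i ^ 2 = -1)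
    (x y : ℕ → K) {N : ℕ} (hxy : ∀ j, y (j + 1) = x j * y j) (hy : ∀ j ≤ N, y j ≠ 0) :
    ((weightedSumSquares K fun p : Fin N × Fin 4 =>
        ![1, -x p.1, -y p.1, x p.1 * y p.1] p.2).prod
      (weightedSumSquares K fun j : Fin 2 => (-1 : K) ^ (j : ℕ))).Equivalent
      (diagForm ({y 0} + (∑ j ∈ range N, {x j} + replicate (3 * N) 1 + {y N}))) := by
  have hhyp : (weightedSumSquares K fun j : Fin 2 => (-1 : K) ^ (j : ℕ)).Equivalent
      (diagForm ({y 0} + {y 0})) := by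
    rw [← two_nsmul, Multiset.nsmul_singleton]
    exact (weightedSumSquares_neg_one_pow_equivalent hi 2).trans
      (diagForm_replicate_two_equivalent h2 hi (hy 0 N.zero_le)).symm
  have hblocks : ∑ j : Fin N, ({1, x j, y j, x j * y j} : Multiset K) =
      ∑ j ∈ range N, {1, x j, y j, y (j + 1)} := by
    simp only [hxy]
    exact Fin.sum_univ_eq_sum_range (fun j => ({1, x j, y j, x j * y j} : Multiset K)) N
  have hdiag := ((weightedSumSquares_pfisterSum_equivalent hi (fun j : Fin N => x j)
    (fun j : Fin N => y j)).prod hhyp).trans (diagForm_add_equivalent _ _).symm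
  rw [hblocks, add_comm, add_assoc] at hdiag
  exact hdiag.trans <| (Equivalent.refl _).diagForm_add
    (diagForm_telescope_equivalent h2 hi x y fun j hj => hy j hj.le)

end Field

/-- Let `K` be a field of characteristic `≠ 2` containing a square root of `−1`, `n ≥ 2`
even, and `a₁, …, a_n ∈ Kˣ` with `a₁⋯a_n = 1` up to squares. Then `⟨a₁, …, a_n⟩` is
Witt-equivalent to the sum of the `n − 2` two-fold Pfister forms
`⟨⟨a_i, a₁a₂⋯a_{i−1}⟩⟩ = ⟨1, −a_i, −a₁⋯a_{i−1}, a_i·a₁⋯a_{i−1}⟩` for `i = 2, …, n−1`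
(Witt equivalence being expressed by adding hyperbolic forms `⟨1,−1,…⟩` on both sides). -/
theorem stmt8 {K : Type*} [Field K] (h2 : (2 : K) ≠ 0) (hi : ∃ i : K, i ^ 2 = -1)
    (n : ℕ) (hn : Even n) (hn2 : 2 ≤ n)
    (a : ℕ → K) (ha : ∀ i, 1 ≤ i → i ≤ n → a i ≠ 0)
    (hprod : ∃ c : K, c ≠ 0 ∧ ∏ i ∈ Finset.Icc 1 n, a i = c ^ 2) :
    ∃ m m' : ℕ,
      QuadraticMap.Equivalent
        ((QuadraticMap.weightedSumSquares K (fun i : Fin n => a ((i : ℕ) + 1))).prod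
          (QuadraticMap.weightedSumSquares K
            (fun i : Fin (2 * m) => ((-1 : K) ^ (i : ℕ)))))
        ((QuadraticMap.weightedSumSquares K
            (fun p : Fin (n - 2) × Fin 4 =>
              ![1, -a ((p.1 : ℕ) + 2),
                -(∏ t ∈ Finset.Icc 1 ((p.1 : ℕ) + 1), a t),
                a ((p.1 : ℕ) + 2) * ∏ t ∈ Finset.Icc 1 ((p.1 : ℕ) + 1), a t] p.2)).prod
          (QuadraticMap.weightedSumSquares K
            (fun i : Fin (2 * m') => ((-1 : K) ^ (i : ℕ))))) := by
  obtain ⟨i, hi⟩ := hi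
  obtain ⟨c, hc, hprod⟩ := hprod
  obtain ⟨N, rfl⟩ : ∃ N, n = N + 2 := ⟨n - 2, by omega⟩
  obtain ⟨k, rfl⟩ : Even N := by simpa [Nat.even_add] using hn
  set P : ℕ → K := fun j => ∏ t ∈ Icc 1 (j + 1), a t
  have hPsucc (j : ℕ) : P (j + 1) = a (j + 2) * P j := by
    simp only [P]
    rw [prod_Icc_succ_top (by omega), mul_comm]
  have hPne : ∀ j ≤ k + k, P j ≠ 0 := fun j hj =>
    prod_ne_zero_iff.mpr fun t ht => ha t (mem_Icc.mp ht).1 (by grind)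
  have hlast : a (k + k + 2) ≠ 0 := ha _ (by omega) le_rfl
  have hPlast : P (k + k) = (c / a (k + k + 2)) ^ 2 * a (k + k + 2) := by
    rw [div_pow, ← hprod, prod_Icc_succ_top (by omega)]
    field_simp
    rfl
  -- the telescoped Pfister sum carries `3 N = 2 * (3 * k)` copies of `⟨1⟩`
  refine ⟨3 * k, 1, (weightedSumSquares_prod_neg_one_pow_equivalent hi a _ _).trans
    (.symm ((weightedSumSquares_pfisterSum_prod_equivalent h2 hi (fun j => a (j + 2)) P hPsucc
      hPne).trans ?_))⟩
  rw [hPlast]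
  refine ((Equivalent.refl _).diagForm_add ((Equivalent.refl _).diagForm_add
    (diagForm_singleton_sq_mul_equivalent (div_ne_zero hc hlast) _))).trans ?_
  have hsum : {P 0} + (∑ j ∈ range (k + k), {a (j + 2)} + replicate (3 * (k + k)) 1 +
      {a (k + k + 2)}) = ∑ j ∈ range (k + k + 2), {a (j + 1)} + replicate (2 * (3 * k)) 1 := by
    rw [sum_range_succ, sum_range_succ', show 2 * (3 * k) = 3 * (k + k) by ring]
    simp only [P, zero_add, Icc_self, prod_singleton]
    abel
  rw [hsum]
end

section
/- Let k be a field, L an extension of k, and R a valuation subring of L containing k with maximal ideal m. Let t ∈ m be a nonzero element, and let s₁, …, s_r ∈ R be elements whose images in the residue field R/m are algebraically independent over k. Then s₁, …, s_r, t are algebraically independent over k in L. In particular, trdeg_k(R/m) + 1 ≤ trdeg_k L whenever m ≠ 0. -/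
/-!
Nonzero elements of `k[s₁, …, s_r]` are units of `R`, because their residues are nonzero. So a
nonzero polynomial relation for `t` over `k[s]` can be divided by a power of `t` until its constant
term is a unit; evaluating at `t ∈ m`, that unit plus an element of `m` would vanish, which is
impossible in the local ring `R`.
-/

open Polynomial IsLocalRing Set

theorem Polynomial.eval_ne_zero_of_isUnit_coeff {R : Type*} [CommRing R] [IsLocalRing R]
    [IsDomain R] {t : R} (ht : t ∈ maximalIdeal R) (ht0 : t ≠ 0) {p : R[X]} (hp : p ≠ 0)
    (hcoeff : ∀ n, p.coeff n ≠ 0 → IsUnit (p.coeff n)) : p.eval t ≠ 0 := by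
  induction p using Polynomial.recOnHorner with
  | M0 => exact absurd rfl hp
  | MC p a hp0 ha _ =>
    have hpt : p.eval t ∈ maximalIdeal R := by
      obtain ⟨q, rfl⟩ := X_dvd_iff.2 hp0
      simpa using Ideal.mul_mem_right _ _ ht
    have hau : IsUnit a := by simpa [hp0, ha] using hcoeff 0
    rw [eval_add, eval_C]
    intro h
    rw [← neg_eq_of_add_eq_zero_right h] at hau
    exact (mem_maximalIdeal _).1 (neg_mem hpt) hau
  | MX p hp0 ih =>
    rw [eval_mul, eval_X]
    exact mul_ne_zero (ih hp0 fun n => by simpa using hcoeff (n + 1)) ht0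

theorem IsLocalRing.transcendental_of_mem_maximalIdeal {A R : Type*} [CommRing A] [CommRing R]
    [IsLocalRing R] [IsDomain R] [Algebra A R]
    (hA : ∀ a : A, a ≠ 0 → IsUnit (algebraMap A R a))
    {t : R} (ht : t ∈ maximalIdeal R) (ht0 : t ≠ 0) : Transcendental A t := by
  have hinj : Function.Injective (algebraMap A R) :=
    (injective_iff_map_eq_zero _).2 fun a h => by_contra fun ha => (hA a ha).ne_zero h
  rw [transcendental_iff]
  intro p hp
  by_contra hp0
  refine eval_ne_zero_of_isUnit_coeff ht ht0 ((Polynomial.map_ne_zero_iff hinj).2 hp0)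
    (fun n hn => ?_) ?_
  · rw [coeff_map] at hn ⊢
    exact hA _ fun h => hn (by rw [h, map_zero])
  · rwa [eval_map_algebraMap]

theorem AlgebraicIndependent.fin_snoc {R A : Type*} [CommRing R] [CommRing A] [Algebra R A]
    {n : ℕ} {x : Fin n → A} (hx : AlgebraicIndependent R x) {a : A}
    (ha : Transcendental (Algebra.adjoin R (range x)) a) :
    AlgebraicIndependent R (Fin.snoc x a : Fin (n + 1) → A) := by
  rw [← algebraicIndependent_equiv finSuccEquivLast.symm]
  convert (hx.option_iff_transcendental a).2 ha with o
  cases o <;> simp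

/-- Let `R` be a valuation subring of a field `L` containing a base field `k`, with
maximal ideal `m`. Let `t ∈ m` be nonzero, and let `s₁, …, s_r ∈ R` have residues in
`R/m` that are algebraically independent over `k` (equivalently: every nonzero polynomial
over `k` evaluated at the `s_i` is a unit of `R`). Then `s₁, …, s_r, t` are algebraically
independent over `k` in `L`. -/
theorem stmt14 {k L : Type*} [Field k] [Field L] [Algebra k L]
    (R : ValuationSubring L) (hkR : ∀ x : k, algebraMap k L x ∈ R)
    (t : L) (htR : t ∈ R) (ht0 : t ≠ 0)
    (htm : ∀ y : R, (y : L) = t → ¬ IsUnit y)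
    {r : ℕ} (s : Fin r → R)
    (hs : ∀ P : MvPolynomial (Fin r) k, P ≠ 0 →
      ∀ y : R, (y : L) = MvPolynomial.aeval (fun i => (s i : L)) P → IsUnit y) :
    AlgebraicIndependent k (Fin.snoc (fun i => ((s i : L))) t : Fin (r + 1) → L) := by
  set sL : Fin r → L := fun i => (s i : L)
  have hsL : AlgebraicIndependent k sL := algebraicIndependent_iff.2 fun P hP =>
    by_contra fun hP0 => not_isUnit_zero (hs P hP0 0 (by simp [hP]))
  set A := Algebra.adjoin k (range sL) with hA
  have hAR : ∀ a : A, (a : L) ∈ R := fun a =>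
    Algebra.adjoin_induction (fun _ ⟨i, hi⟩ => hi ▸ (s i).2) hkR
      (fun _ _ _ _ => add_mem) (fun _ _ _ _ => mul_mem) a.2
  let _ : Algebra A R := (RingHom.codRestrict A.val.toRingHom R hAR).toAlgebra
  have : IsScalarTower A R L := IsScalarTower.of_algebraMap_eq fun _ => rfl
  have hunit : ∀ a : A, a ≠ 0 → IsUnit (algebraMap A R a) := by
    rintro ⟨a, ha⟩ ha0
    rw [hA, Algebra.adjoin_range_eq_range_aeval] at ha
    obtain ⟨P, rfl⟩ := ha
    exact hs P (by rintro rfl; exact ha0 (Subtype.ext (map_zero _))) _ rfl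
  have htA : Transcendental A (⟨t, htR⟩ : R) :=
    transcendental_of_mem_maximalIdeal hunit (htm _ rfl) fun h => ht0 (congrArg Subtype.val h)
  exact hsL.fin_snoc ((transcendental_algebraMap_iff Subtype.val_injective).2 htA)
end
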